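/- arXiv:2008.03819 — 3 statements merged into one kernel-verified Lean document; each statement's English description precedes it below -/
import Mathlib

section
/- Let C be a pointed, spanning polyhedral cone in E = ℝⁿ, let D ⊆ E be a downset, let τ ⊆ σ be faces of C, and let a be a cogenerator of D along τ with nadir σ. Then there exists u ∈ a − σ° such that every point x ∈ (u + σ° + C) ∩ D is globally supported on τ, meaning: for every face τ' of C with τ' ⊄ τ there exists t ∈ τ' with x + t ∉ D. -/
open Pointwise

/-- A polyhedral cone in `ℝⁿ`: an intersection of finitely many closed linear half-spaces. -/
def IsPolyCone {n : ℕ} (C : Set (Fin n → ℝ)) : Prop :=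
  ∃ (m : ℕ) (ℓ : Fin m → ((Fin n → ℝ) →ₗ[ℝ] ℝ)), C = {x | ∀ i, 0 ≤ ℓ i x}

/-- A face of a cone `C`: a subset of `C` containing `0`, closed under addition, and such
that whenever `x, y ∈ C` and `x + y` lies in the subset, both `x` and `y` do. -/
def IsConeFace {M : Type*} [AddCommMonoid M] (σ C : Set M) : Prop :=
  σ ⊆ C ∧ (0 : M) ∈ σ ∧ (∀ x ∈ σ, ∀ y ∈ σ, x + y ∈ σ) ∧
    ∀ x ∈ C, ∀ y ∈ C, x + y ∈ σ → x ∈ σ ∧ y ∈ σ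

/-- A downset for the partial order `x ≼ y ↔ y - x ∈ C`. -/
def IsDownset {n : ℕ} (C D : Set (Fin n → ℝ)) : Prop :=
  ∀ x y : Fin n → ℝ, y ∈ D → y - x ∈ C → x ∈ D

/-- The upper boundary downset `D^σ = {a | a - σ° ⊆ D}`. -/
def upSet {n : ℕ} (D σ : Set (Fin n → ℝ)) : Set (Fin n → ℝ) :=
  {a | ∀ s ∈ intrinsicInterior ℝ σ, a - s ∈ D}

/-- `a` is a cogenerator of the downset `D` along the face `τ` with nadir `σ`:
`(a + C) ∩ D^σ = a + τ` and no face `σ''` with `τ ⊆ σ'' ⊊ σ` satisfies `a - σ''° ⊆ D`. -/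
def IsCogen {n : ℕ} (C D τ σ : Set (Fin n → ℝ)) (a : Fin n → ℝ) : Prop :=
  (({a} + C) ∩ upSet D σ = {a} + τ) ∧
  ∀ σ'' : Set (Fin n → ℝ), IsConeFace σ'' C → τ ⊆ σ'' → σ'' ⊂ σ →
    ¬ (∀ s ∈ intrinsicInterior ℝ σ'', a - s ∈ D)

/-- A `σ`-vicinity of a point `p` of `E ⧸ span τ`: the image under the quotient map of
`u + σ° + C` for some `u` admitting a representative `w` of `p` with `w - u ∈ σ°`. -/
def IsVic {n : ℕ} (C σ τ : Set (Fin n → ℝ))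
    (p : (Fin n → ℝ) ⧸ Submodule.span ℝ τ)
    (V : Set ((Fin n → ℝ) ⧸ Submodule.span ℝ τ)) : Prop :=
  ∃ u w : Fin n → ℝ, (Submodule.span ℝ τ).mkQ w = p ∧
    w - u ∈ intrinsicInterior ℝ σ ∧
    V = (Submodule.span ℝ τ).mkQ '' ({u} + intrinsicInterior ℝ σ + C)


/-!
For each face `ρ ⊄ τ` the cogenerator condition `(a + C) ∩ D^σ = a + τ` yields `s_ρ ∈ σ°` and
`t_ρ ∈ ρ` with `a + t_ρ - s_ρ ∉ D`. A polyhedral cone has only finitely many faces, and `σ°` is a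
relatively open cone, so for `c₀ ∈ σ°` and small `ε > 0` the point `u = a - ε c₀` satisfies
`s_ρ - ε c₀ ∈ σ` for every such `ρ`. Then each `x ∈ u + σ° + C` has `x + t_ρ ≽ a + t_ρ - s_ρ`,
and `x + t_ρ ∉ D` because `D` is a downset.
-/

open Set Filter Topology

theorem eventually_add_smul_mem_of_mem_intrinsicInterior {E : Type*} [AddCommGroup E]
    [Module ℝ E] [TopologicalSpace E] [IsTopologicalAddGroup E] [ContinuousSMul ℝ E]
    {s : Set E} {x v : E} (hx : x ∈ intrinsicInterior ℝ s)
    (hv : v ∈ (affineSpan ℝ s).direction) :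
    ∀ᶠ ε in 𝓝 (0 : ℝ), x + ε • v ∈ s := by
  obtain ⟨x, hx, rfl⟩ := hx
  let f : ℝ → affineSpan ℝ s := fun ε =>
    ⟨ε • v + x, AffineSubspace.vadd_mem_of_mem_direction (Submodule.smul_mem _ ε hv) x.2⟩
  have hf : Continuous f := by fun_prop
  have hf0 : f 0 = x := by ext; simp [f]
  filter_upwards [hf.tendsto 0 (hf0 ▸ isOpen_interior.mem_nhds hx)] with ε hε
  simpa [f, add_comm] using interior_subset hε

theorem smul_mem_intrinsicInterior {V : Type*} [NormedAddCommGroup V] [NormedSpace ℝ V]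
    [FiniteDimensional ℝ V] {s : Set V} (hs : ∀ c : ℝ, 0 < c → ∀ x ∈ s, c • x ∈ s) {c : ℝ}
    (hc : 0 < c) {x : V} (hx : x ∈ intrinsicInterior ℝ s) : c • x ∈ intrinsicInterior ℝ s := by
  have hcs : c • s = s := by
    refine Subset.antisymm (smul_set_subset_iff.2 (hs c hc)) fun y hy => ?_
    exact ⟨c⁻¹ • y, hs _ (inv_pos.2 hc) y hy, smul_inv_smul₀ hc.ne' y⟩
  let φ := (LinearEquiv.smulOfNeZero ℝ V c hc.ne').toAffineEquiv
  have himage : φ '' s = s := by simpa [φ, ← Set.image_smul] using hcs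
  rw [← himage, AffineEquiv.intrinsicInterior_image]
  exact mem_image_of_mem φ hx

section ConeFace

variable {M : Type*} [AddCommMonoid M] {σ C : Set M}

theorem IsConeFace.nsmul_mem (hσ : IsConeFace σ C) {x : M} (hx : x ∈ σ) (k : ℕ) : k • x ∈ σ := by
  induction k with
  | zero => simpa using hσ.2.1
  | succ k ih => simpa [succ_nsmul] using hσ.2.2.1 _ ih _ hx

theorem IsConeFace.sum_mem (hσ : IsConeFace σ C) {ι : Type*} (s : Finset ι) {f : ι → M}
    (hf : ∀ i ∈ s, f i ∈ σ) : ∑ i ∈ s, f i ∈ σ :=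
  Finset.sum_induction f (· ∈ σ) (fun _ _ hx hy => hσ.2.2.1 _ hx _ hy) hσ.2.1 hf

theorem IsConeFace.smul_mem [Module ℝ M] (hC : ∀ c : ℝ, 0 ≤ c → ∀ x ∈ C, c • x ∈ C)
    (hσ : IsConeFace σ C) {c : ℝ} (hc : 0 ≤ c) {x : M} (hx : x ∈ σ) : c • x ∈ σ := by
  obtain ⟨k, hk⟩ := exists_nat_ge c
  have hkx : (c • x) + (k - c) • x ∈ σ := by
    rw [← add_smul, add_sub_cancel, Nat.cast_smul_eq_nsmul]
    exact hσ.nsmul_mem hx k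
  exact (hσ.2.2.2 _ (hC c hc x (hσ.1 hx)) _ (hC _ (sub_nonneg.2 hk) x (hσ.1 hx)) hkx).1

theorem IsConeFace.convex [Module ℝ M] (hC : ∀ c : ℝ, 0 ≤ c → ∀ x ∈ C, c • x ∈ C)
    (hσ : IsConeFace σ C) : Convex ℝ σ :=
  fun _ hx _ hy _ _ ha hb _ => hσ.2.2.1 _ (hσ.smul_mem hC ha hx) _ (hσ.smul_mem hC hb hy)

end ConeFace

section PolyCone

variable {n : ℕ} {C : Set (Fin n → ℝ)}

theorem IsPolyCone.add_mem (hC : IsPolyCone C) {x y : Fin n → ℝ} (hx : x ∈ C) (hy : y ∈ C) :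
    x + y ∈ C := by
  obtain ⟨m, ℓ, rfl⟩ := hC
  intro i
  simpa using add_nonneg (hx i) (hy i)

theorem IsPolyCone.smul_mem (hC : IsPolyCone C) : ∀ c : ℝ, 0 ≤ c → ∀ x ∈ C, c • x ∈ C := by
  obtain ⟨m, ℓ, rfl⟩ := hC
  intro c hc x hx i
  simpa using mul_nonneg hc (hx i)

theorem IsConeFace.eq_setOf_vanishing {m : ℕ} {ℓ : Fin m → (Fin n → ℝ) →ₗ[ℝ] ℝ}
    {ρ : Set (Fin n → ℝ)} (hρ : IsConeFace ρ {x | ∀ i, 0 ≤ ℓ i x}) :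
    ρ = {x | (∀ i, 0 ≤ ℓ i x) ∧ ∀ i, (∀ y ∈ ρ, ℓ i y = 0) → ℓ i x = 0} := by
  refine Subset.antisymm (fun x hx => ⟨hρ.1 hx, fun i hi => hi x hx⟩) ?_
  rintro x ⟨hxC, hxρ⟩
  have hwitness : ∀ i, ∃ y ∈ ρ, ℓ i x ≠ 0 → 0 < ℓ i y := by
    intro i
    by_cases hi : ∀ y ∈ ρ, ℓ i y = 0
    · exact ⟨0, hρ.2.1, fun h => absurd (hxρ i hi) h⟩
    · obtain ⟨y, hy, hy0⟩ := not_forall₂.1 hi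
      exact ⟨y, hy, fun _ => (hρ.1 hy i).lt_of_ne' hy0⟩
  choose g hgρ hg using hwitness
  set y := ∑ i, g i
  have hyρ : y ∈ ρ := hρ.sum_mem _ fun i _ => hgρ i
  -- `y` is positive on every `ℓ i` that does not vanish at `x`, so a multiple of `y` dominates `x`
  have hbound : ∀ᶠ k : ℕ in atTop, ∀ i, ℓ i x ≤ k * ℓ i y := by
    rw [eventually_all]
    intro i
    by_cases hxi : ℓ i x = 0
    · exact Eventually.of_forall fun k => hxi ▸ mul_nonneg k.cast_nonneg (hρ.1 hyρ i)
    have hgy : ℓ i (g i) ≤ ℓ i y := by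
      rw [map_sum]
      exact Finset.single_le_sum (fun j _ => hρ.1 (hgρ j) i) (Finset.mem_univ i)
    exact (tendsto_natCast_atTop_atTop.atTop_mul_const
      ((hg i hxi).trans_le hgy)).eventually_ge_atTop _
  obtain ⟨k, hk⟩ := hbound.exists
  have hdiff : k • y - x ∈ {x | ∀ i, 0 ≤ ℓ i x} := fun i => by
    rw [map_sub, map_nsmul, nsmul_eq_mul, sub_nonneg]
    exact hk i
  have hsum : x + (k • y - x) ∈ ρ := by
    rw [add_sub_cancel]
    exact hρ.nsmul_mem hyρ k
  exact (hρ.2.2.2 x hxC _ hdiff hsum).1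

theorem IsPolyCone.finite_faces (hC : IsPolyCone C) : {ρ | IsConeFace ρ C}.Finite := by
  obtain ⟨m, ℓ, rfl⟩ := hC
  refine Finite.of_finite_image (f := fun ρ => {i | ∀ y ∈ ρ, ℓ i y = 0}) (toFinite _) ?_
  intro ρ₁ h₁ ρ₂ h₂ heq
  rw [h₁.eq_setOf_vanishing, h₂.eq_setOf_vanishing]
  simp only [Set.ext_iff, mem_ofPred_eq] at heq
  simp_rw [heq]

end PolyCone

theorem IsCogen.exists_add_sub_notMem {n : ℕ} {C D τ σ ρ : Set (Fin n → ℝ)} {a : Fin n → ℝ}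
    (ha : IsCogen C D τ σ a) (hρC : ρ ⊆ C) (hρτ : ¬ ρ ⊆ τ) :
    ∃ s ∈ intrinsicInterior ℝ σ, ∃ t ∈ ρ, a + t - s ∉ D := by
  by_contra! h
  refine hρτ fun t ht => ?_
  have hat : a + t ∈ ({a} + C) ∩ upSet D σ :=
    ⟨add_mem_add rfl (hρC ht), fun s hs => h s hs t ht⟩
  rw [ha.1, singleton_add, mem_image] at hat
  obtain ⟨t', ht', heq⟩ := hat
  exact add_left_cancel heq ▸ ht'

theorem cogenerator_has_supported_vicinity_general {n : ℕ} (C D τ σ : Set (Fin n → ℝ))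
    (hC : IsPolyCone C) (hD : IsDownset C D) (hσ : IsConeFace σ C)
    (a : Fin n → ℝ) (ha : IsCogen C D τ σ a) :
    ∃ u : Fin n → ℝ, a - u ∈ intrinsicInterior ℝ σ ∧
      ∀ x ∈ ({u} + intrinsicInterior ℝ σ + C) ∩ D,
        ∀ τ' : Set (Fin n → ℝ), IsConeFace τ' C → ¬ τ' ⊆ τ →
          ∃ t ∈ τ', x + t ∉ D := by
  obtain ⟨c₀, hc₀⟩ := Set.Nonempty.intrinsicInterior (hσ.convex hC.smul_mem) ⟨0, hσ.2.1⟩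
  have hc₀dir : 0 -ᵥ c₀ ∈ (affineSpan ℝ σ).direction :=
    AffineSubspace.vsub_mem_direction (subset_affineSpan _ _ hσ.2.1)
      (subset_affineSpan _ _ (intrinsicInterior_subset hc₀))
  have hfaces : {ρ | IsConeFace ρ C ∧ ¬ ρ ⊆ τ}.Finite := hC.finite_faces.subset fun _ h => h.1
  have hsmall : ∀ᶠ ε in 𝓝 (0 : ℝ), ∀ ρ ∈ {ρ | IsConeFace ρ C ∧ ¬ ρ ⊆ τ},
      ∃ s ∈ intrinsicInterior ℝ σ, s - ε • c₀ ∈ σ ∧ ∃ t ∈ ρ, a + t - s ∉ D := by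
    refine (eventually_all_finite hfaces).2 fun ρ ⟨hρ, hρτ⟩ => ?_
    obtain ⟨s, hs, t, ht, hst⟩ := ha.exists_add_sub_notMem hρ.1 hρτ
    filter_upwards [eventually_add_smul_mem_of_mem_intrinsicInterior hs hc₀dir] with ε hε
    exact ⟨s, hs, by simpa [sub_eq_add_neg] using hε, t, ht, hst⟩
  obtain ⟨ε, hε, hε0⟩ := ((hsmall.filter_mono nhdsWithin_le_nhds).and
    (self_mem_nhdsWithin (s := Ioi 0))).exists
  have hσ_cone : ∀ c : ℝ, 0 < c → ∀ x ∈ σ, c • x ∈ σ := fun c hc _ hx =>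
    hσ.smul_mem hC.smul_mem hc.le hx
  refine ⟨a - ε • c₀, by simpa using smul_mem_intrinsicInterior hσ_cone hε0 hc₀, ?_⟩
  rintro _ ⟨⟨_, ⟨_, rfl, s, hs, rfl⟩, c, hc, rfl⟩, -⟩ τ' hτ' hτ'τ
  obtain ⟨s', -, hs'σ, t, ht, hnot⟩ := hε τ' ⟨hτ', hτ'τ⟩
  refine ⟨t, ht, fun hxt => hnot (hD _ _ hxt ?_)⟩
  have hdom := hC.add_mem (hσ.1 (hσ.2.2.1 _ hs'σ _ (intrinsicInterior_subset hs))) hc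
  convert hdom using 1
  dsimp only
  abel

/-- Every cogenerator of `D` along `τ` with nadir `σ` has a
`σ`-vicinity inside `D` all of whose points are globally supported on `τ`. -/
theorem cogenerator_has_supported_vicinity {n : ℕ} (C D τ σ : Set (Fin n → ℝ))
    (hC : IsPolyCone C) (hpointed : C ∩ (-C) = {0}) (hspan : C - C = Set.univ)
    (hD : IsDownset C D) (hτ : IsConeFace τ C) (hσ : IsConeFace σ C) (hts : τ ⊆ σ)
    (a : Fin n → ℝ) (ha : IsCogen C D τ σ a) :
    ∃ u : Fin n → ℝ, a - u ∈ intrinsicInterior ℝ σ ∧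
      ∀ x ∈ ({u} + intrinsicInterior ℝ σ + C) ∩ D,
        ∀ τ' : Set (Fin n → ℝ), IsConeFace τ' C → ¬ τ' ⊆ τ →
          ∃ t ∈ τ', x + t ∉ D :=
  cogenerator_has_supported_vicinity_general C D τ σ hC hD hσ a ha
end

section
/- Let Q₊ ⊆ ℤⁿ be a finitely generated submonoid with Q₊ ∩ (−Q₊) = {0}, and let I ⊆ ℤⁿ be an interval (the intersection of an upset and a downset for the order x ≼ y iff y − x ∈ Q₊). Then for every b ∈ I there exist a point a ∈ I with b ≼ a and a face τ of Q₊ such that (a + Q₊) ∩ I = a + τ; that is, every element of I precedes a closed cogenerator of I along some face. -/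
open Pointwise

/- The candidate face at `a ∈ I` is the local cone `{t ∈ Q₊ | a + t ∈ I}`. It always
contains `0` and, as `I` is an interval, is closed under splitting sums; for `b ≼ a` it is a downset
of `Q₊`, and it shrinks as `a` moves up. Since `Q₊` is finitely generated, Dickson's lemma makes
it well-quasi-ordered, so downsets of `Q₊` satisfy the descending chain condition and some
`a ≽ b` in `I` has an inclusion-minimal local cone. At such an `a`, moving along `t` in the local
cone cannot shrink it, which is exactly closure under addition. -/

theorem AddSubmonoid.FG.partiallyWellOrderedOn_sub_mem {G : Type*} [AddCommGroup G]
    {S : AddSubmonoid G} (hS : S.FG) :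
    (S : Set G).PartiallyWellOrderedOn (fun x y ↦ y - x ∈ S) := by
  obtain ⟨T, rfl⟩ := hS
  set π : (T → ℕ) → G := fun c ↦ ∑ i, c i • (i : G)
  have hπ : (AddSubmonoid.closure (T : Set G) : Set G) = π '' Set.univ := by
    ext x
    simp [AddSubmonoid.mem_closure_finset', π, eq_comm]
  rw [hπ]
  refine (Set.isPWO_of_wellQuasiOrderedLE _).image_of_monotone_on fun c _ d _ hcd ↦ ?_
  obtain ⟨e, rfl⟩ := exists_add_of_le hcd
  have : π (c + e) - π c = π e := by
    simp [π, add_nsmul, Finset.sum_add_distrib]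
  rw [this, ← SetLike.mem_coe, hπ]
  exact Set.mem_image_of_mem π (Set.mem_univ e)

theorem Set.PartiallyWellOrderedOn.wellFoundedOn_downClosed {α : Type*} {r : α → α → Prop}
    {s : Set α} (hs : s.PartiallyWellOrderedOn r) :
    {A : Set α | A ⊆ s ∧ ∀ v ∈ A, ∀ u ∈ s, r u v → u ∈ A}.WellFoundedOn (· < ·) := by
  rw [Set.wellFoundedOn_iff_no_descending_seq]
  intro f hf
  choose x hx hnx using fun n ↦ Set.exists_of_ssubset (f.map_rel_iff.2 (Nat.lt_succ_self n))
  obtain ⟨m, n, hmn, hr⟩ := hs.exists_lt fun n ↦ (hf n).1 (hx n)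
  have hle : f n ≤ f (m + 1) := by
    rcases (show m + 1 ≤ n from hmn).eq_or_lt with h | h
    · rw [h]
    · exact (f.map_rel_iff.2 h).le
  exact hnx m ((hf (m + 1)).2 _ (hle (hx n)) _ ((hf m).1 (hx m)) hr)

namespace AddSubmonoid

variable {G : Type*} [AddCommGroup G] (S : AddSubmonoid G) (I : Set G)

def IsInterval : Prop :=
  ∀ x y z : G, x ∈ I → z ∈ I → y - x ∈ S → z - y ∈ S → y ∈ I

def localCone (a : G) : Set G :=
  {t | t ∈ S ∧ a + t ∈ I}

theorem singleton_add_inter_eq (a : G) :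
    ({a} + (S : Set G)) ∩ I = {a} + S.localCone I a := by
  ext x
  simp only [localCone, Set.mem_inter_iff, Set.singleton_add, Set.image_add_left,
    Set.mem_preimage, Set.mem_ofPred_eq, SetLike.mem_coe, add_neg_cancel_left]

variable {S I}

namespace IsInterval

variable (hI : S.IsInterval I) {a b : G}
include hI

theorem localCone_downClosed (hb : b ∈ I) (hab : a - b ∈ S) :
    ∀ v ∈ S.localCone I a, ∀ u ∈ S, v - u ∈ S → u ∈ S.localCone I a := by
  rintro v ⟨-, hv⟩ u hu hvu
  refine ⟨hu, hI b _ _ hb hv ?_ (by simpa using hvu)⟩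
  simpa [add_sub_right_comm] using S.add_mem hab hu

theorem localCone_add_subset (hb : b ∈ I) (hab : a - b ∈ S) {t : G} (ht : t ∈ S) :
    S.localCone I (a + t) ⊆ S.localCone I a := by
  rintro u ⟨hu, htu⟩
  refine ⟨hu, hI b _ _ hb htu ?_ (by simpa [add_right_comm] using ht)⟩
  simpa [add_sub_right_comm] using S.add_mem hab hu

theorem exists_minimal_localCone (hS : S.FG) (hb : b ∈ I) :
    ∃ a ∈ I, a - b ∈ S ∧ ∀ a' ∈ I, a' - b ∈ S →
      S.localCone I a' ⊆ S.localCone I a → S.localCone I a ⊆ S.localCone I a' := by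
  set K := {a | a ∈ I ∧ a - b ∈ S}
  have hK : S.localCone I '' K ⊆
      {A | A ⊆ (S : Set G) ∧ ∀ v ∈ A, ∀ u ∈ (S : Set G), v - u ∈ S → u ∈ A} := by
    rintro _ ⟨a, ⟨-, hab⟩, rfl⟩
    exact ⟨fun t ht ↦ ht.1, hI.localCone_downClosed hb hab⟩
  obtain ⟨_, ⟨a, ⟨ha, hab⟩, rfl⟩, hmin⟩ :=
    (hS.partiallyWellOrderedOn_sub_mem.wellFoundedOn_downClosed.subset hK).exists_minimal
      ⟨_, b, ⟨hb, by simp⟩, rfl⟩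
  exact ⟨a, ha, hab, fun a' ha' ha'b h ↦ hmin ⟨a', ⟨ha', ha'b⟩, rfl⟩ h⟩

theorem isConeFace_localCone (ha : a ∈ I)
    (hmin : ∀ t ∈ S.localCone I a, S.localCone I a ⊆ S.localCone I (a + t)) :
    IsConeFace (S.localCone I a) S := by
  refine ⟨fun t ht ↦ ht.1, ⟨S.zero_mem, by simpa using ha⟩, ?_, ?_⟩
  · intro t ht u hu
    exact ⟨S.add_mem ht.1 hu.1, by simpa [add_assoc] using (hmin t ht hu).2⟩
  · rintro t ht u hu ⟨-, htu⟩
    exact ⟨⟨ht, hI a _ _ ha htu (by simpa using ht) (by simpa [← add_assoc] using hu)⟩,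
      ⟨hu, hI a _ _ ha htu (by simpa using hu) (by simpa [add_left_comm, ← add_assoc] using ht)⟩⟩

theorem exists_isConeFace_localCone (hS : S.FG) (hb : b ∈ I) :
    ∃ a ∈ I, a - b ∈ S ∧ IsConeFace (S.localCone I a) S := by
  obtain ⟨a, ha, hab, hmin⟩ := hI.exists_minimal_localCone hS hb
  refine ⟨a, ha, hab, hI.isConeFace_localCone ha fun t ht ↦ ?_⟩
  have hatb : a + t - b ∈ S := by simpa [add_sub_right_comm] using S.add_mem hab ht.1
  exact hmin _ ht.2 hatb (hI.localCone_add_subset hb hab ht.1)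

end IsInterval

end AddSubmonoid

theorem discrete_exists_closed_cogenerator_general {n : ℕ} (S : AddSubmonoid (Fin n → ℤ))
    (hFG : S.FG)
    (I : Set (Fin n → ℤ))
    (hI : ∀ x y z : Fin n → ℤ, x ∈ I → z ∈ I → y - x ∈ S → z - y ∈ S → y ∈ I)
    (b : Fin n → ℤ) (hb : b ∈ I) :
    ∃ a ∈ I, ∃ τ : Set (Fin n → ℤ), IsConeFace τ (S : Set (Fin n → ℤ)) ∧
      a - b ∈ S ∧ ({a} + (S : Set (Fin n → ℤ))) ∩ I = {a} + τ := by
  obtain ⟨a, ha, hab, hface⟩ := AddSubmonoid.IsInterval.exists_isConeFace_localCone hI hFG hb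
  exact ⟨a, ha, S.localCone I a, hface, hab, S.singleton_add_inter_eq I a⟩

/-- In a discrete polyhedral group, every element of an interval `I`
precedes a closed cogenerator of `I` along some face. -/
theorem discrete_exists_closed_cogenerator {n : ℕ} (S : AddSubmonoid (Fin n → ℤ))
    (hFG : S.FG) (hpointed : (S : Set (Fin n → ℤ)) ∩ (-(S : Set (Fin n → ℤ))) = {0})
    (I : Set (Fin n → ℤ))
    (hI : ∀ x y z : Fin n → ℤ, x ∈ I → z ∈ I → y - x ∈ S → z - y ∈ S → y ∈ I)
    (b : Fin n → ℤ) (hb : b ∈ I) :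
    ∃ a ∈ I, ∃ τ : Set (Fin n → ℤ), IsConeFace τ (S : Set (Fin n → ℤ)) ∧
      a - b ∈ S ∧ ({a} + (S : Set (Fin n → ℤ))) ∩ I = {a} + τ :=
  discrete_exists_closed_cogenerator_general S hFG I hI b hb
end

section
/- Let Q₊ ⊆ ℤⁿ be a finitely generated submonoid with Q₊ ∩ (−Q₊) = {0}, and let I ⊆ ℤⁿ be an interval. For each face τ of Q₊ set G_τ := {a ∈ I | (a + Q₊) ∩ I = a + τ} (the closed cogenerators of I along τ) and I^τ := ⋃_{a ∈ G_τ} ((a + ⟨τ⟩ − Q₊) ∩ I), where ⟨τ⟩ is the subgroup of ℤⁿ generated by τ. Then: (i) I = ⋃_τ I^τ, the union over all faces τ of Q₊; and (ii) each I^τ is τ-coprimary in the sense that for every b ∈ I^τ there exists a ∈ I^τ with b ≼ a and (a + Q₊) ∩ I^τ = a + τ. -/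
open Pointwise

/-- The `τ`-coprimary part of an interval `I`: the union over the closed cogenerators `a`
of `I` along `τ` of the sets `(a + ⟨τ⟩ - Q₊) ∩ I`. -/
def coprimaryPart {n : ℕ} (S : AddSubmonoid (Fin n → ℤ)) (I τ : Set (Fin n → ℤ)) :
    Set (Fin n → ℤ) :=
  ⋃ a ∈ {a ∈ I | ({a} + (S : Set (Fin n → ℤ))) ∩ I = {a} + τ},
    (({a} + (AddSubgroup.closure τ : Set (Fin n → ℤ)) - (S : Set (Fin n → ℤ))) ∩ I)

/-!
For `a ∈ I` write `D(a) = upDirections S I a = {s ∈ Q₊ | a + s ∈ I}`, so that `a` is a closed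
cogenerator along `τ` exactly when `D(a) = τ`. These sets are lower sets of `Q₊` and shrink as `a`
moves up inside `I`; pulled back along a surjection `ℕᵏ → Q₊` they become lower sets of `ℕᵏ`,
which satisfy the descending chain condition by Dickson's lemma. A point `a ≽ b` of `I` with
minimal `D(a)` has `D(a + s) = D(a)` for all `s ∈ D(a)`, so `D(a)` is closed under addition and,
`I` being an interval, a face: this gives (i). For (ii), since `G_τ + τ ⊆ G_τ` every point of
`I^τ` lies below some `a ∈ G_τ`, and for such `a` the set `(a + Q₊) ∩ I^τ` is squeezed between
`a + τ ⊆ I^τ` and `(a + Q₊) ∩ I = a + τ`.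
-/

instance LowerSet.wellFoundedLT_of_wellQuasiOrderedLE {α : Type*} [Preorder α]
    [WellQuasiOrderedLE α] : WellFoundedLT (LowerSet α) := by
  rw [WellFoundedLT, isWellFounded_iff, RelEmbedding.wellFounded_iff_isEmpty]
  refine ⟨fun f => ?_⟩
  have hf : StrictAnti f := fun _ _ h => f.map_rel_iff.2 h
  have hdrop : ∀ k, ∃ x ∈ f k, x ∉ f (k + 1) := fun k =>
    Set.exists_of_ssubset (LowerSet.coe_ssubset_coe.2 (hf k.lt_succ_self))
  choose u hu hu' using hdrop
  obtain ⟨i, j, hij, hle⟩ := wellQuasiOrdered_le u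
  exact hu' i ((f (i + 1)).lower hle (hf.antitone hij (hu j)))

theorem AddSubmonoid.FG.exists_minimal_of_lower {M : Type*} [AddCommMonoid M]
    {S : AddSubmonoid M} (hS : S.FG) {𝒳 : Set (Set M)}
    (h𝒳 : ∀ X ∈ 𝒳, X ⊆ S ∧ ∀ t ∈ S, ∀ r ∈ S, t + r ∈ X → t ∈ X)
    (hne : 𝒳.Nonempty) : ∃ X, Minimal (· ∈ 𝒳) X := by
  obtain ⟨F, rfl⟩ := hS
  set φ : (F → ℕ) →ₗ[ℕ] M := Fintype.linearCombination ℕ (fun i : F => (i : M))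
  have hrange : Set.range φ = AddSubmonoid.closure (F : Set M) := by
    ext x
    simp [AddSubmonoid.mem_closure_finset', φ, Fintype.linearCombination_apply, eq_comm]
  have hφ : ∀ v, φ v ∈ AddSubmonoid.closure (F : Set M) := fun v => by
    rw [← SetLike.mem_coe, ← hrange]; exact ⟨v, rfl⟩
  have hlower : ∀ X ∈ 𝒳, IsLowerSet (φ ⁻¹' X) := by
    intro X hX w v hvw hw
    obtain ⟨d, rfl⟩ := exists_add_of_le hvw
    exact (h𝒳 X hX).2 _ (hφ v) _ (hφ d) (by simpa using hw)
  obtain ⟨⟨X, hX⟩, -, hmin⟩ := exists_minimalFor_of_wellFoundedLT (fun _ => True)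
    (fun X : 𝒳 => (⟨φ ⁻¹' X, hlower X X.2⟩ : LowerSet (F → ℕ))) ⟨⟨_, hne.some_mem⟩, trivial⟩
  refine ⟨X, hX, fun Y hY hYX => ?_⟩
  have hpre : φ ⁻¹' X ⊆ φ ⁻¹' Y :=
    hmin (j := ⟨Y, hY⟩) trivial (Set.preimage_mono (f := φ) hYX :)
  rw [← Set.image_preimage_eq_of_subset ((h𝒳 X hX).1.trans hrange.ge),
    ← Set.image_preimage_eq_of_subset ((h𝒳 Y hY).1.trans hrange.ge)]
  exact Set.image_mono hpre

theorem AddSubgroup.exists_sub_of_mem_closure {G : Type*} [AddCommGroup G] {τ : Set G}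
    (h0 : (0 : G) ∈ τ) (hadd : ∀ x ∈ τ, ∀ y ∈ τ, x + y ∈ τ) {t : G}
    (ht : t ∈ AddSubgroup.closure τ) : ∃ u ∈ τ, ∃ v ∈ τ, t = u - v := by
  induction ht using AddSubgroup.closure_induction with
  | mem x hx => exact ⟨x, hx, 0, h0, (sub_zero x).symm⟩
  | zero => exact ⟨0, h0, 0, h0, (sub_zero 0).symm⟩
  | add x y _ _ hx hy =>
    obtain ⟨⟨u, hu, v, hv, rfl⟩, ⟨u', hu', v', hv', rfl⟩⟩ := And.intro hx hy
    exact ⟨u + u', hadd u hu u' hu', v + v', hadd v hv v' hv', by abel⟩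
  | neg x _ hx =>
    obtain ⟨u, hu, v, hv, rfl⟩ := hx
    exact ⟨v, hv, u, hu, neg_sub u v⟩

section Interval

variable {G : Type*} [AddCommGroup G] {S : AddSubmonoid G} {I τ : Set G} {a b : G}

def IsInterval (S : AddSubmonoid G) (I : Set G) : Prop :=
  ∀ x y z : G, x ∈ I → z ∈ I → y - x ∈ S → z - y ∈ S → y ∈ I

def upDirections (S : AddSubmonoid G) (I : Set G) (a : G) : Set G :=
  (S : Set G) ∩ (a + ·) ⁻¹' I

def closedCogenerators (S : AddSubmonoid G) (I τ : Set G) : Set G :=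
  {a ∈ I | ({a} + (S : Set G)) ∩ I = {a} + τ}

theorem singleton_add_inter_eq_singleton_add_upDirections (S : AddSubmonoid G) (I : Set G)
    (a : G) : ({a} + (S : Set G)) ∩ I = {a} + upDirections S I a := by
  simp only [Set.singleton_add, upDirections, Set.image_inter_preimage]

theorem mem_closedCogenerators_iff :
    a ∈ closedCogenerators S I τ ↔ a ∈ I ∧ upDirections S I a = τ := by
  rw [closedCogenerators, Set.mem_ofPred_eq, singleton_add_inter_eq_singleton_add_upDirections,
    Set.singleton_add, Set.singleton_add, (Set.image_injective.2 (add_right_injective a)).eq_iff]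

theorem IsInterval.mem_upDirections_of_add_mem (hI : IsInterval S I) (ha : a ∈ I) {t r : G}
    (ht : t ∈ S) (hr : r ∈ S) (h : t + r ∈ upDirections S I a) : t ∈ upDirections S I a :=
  ⟨ht, hI a (a + t) (a + (t + r)) ha h.2 (by simpa using ht) (by simpa using hr)⟩

theorem IsInterval.upDirections_subset (hI : IsInterval S I) (ha : a ∈ I) {a' : G}
    (h : a' - a ∈ S) : upDirections S I a' ⊆ upDirections S I a := by
  rintro s ⟨hs, hsI⟩
  have hsI : a' + s ∈ I := hsI
  refine hI.mem_upDirections_of_add_mem ha hs h ⟨S.add_mem hs h, ?_⟩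
  show a + (s + (a' - a)) ∈ I
  convert hsI using 1
  abel

theorem IsInterval.isConeFace_upDirections (hI : IsInterval S I) (ha : a ∈ I)
    (hadd : ∀ s ∈ upDirections S I a, ∀ t ∈ upDirections S I a, s + t ∈ upDirections S I a) :
    IsConeFace (upDirections S I a) S :=
  ⟨Set.inter_subset_left, ⟨S.zero_mem, by simpa using ha⟩, hadd, fun x hx y hy hxy =>
    ⟨hI.mem_upDirections_of_add_mem ha hx hy hxy,
      hI.mem_upDirections_of_add_mem ha hy hx (add_comm x y ▸ hxy)⟩⟩

theorem IsInterval.exists_sub_mem_add_closed_upDirections (hS : S.FG) (hI : IsInterval S I)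
    (hb : b ∈ I) : ∃ a ∈ I, a - b ∈ S ∧
      ∀ s ∈ upDirections S I a, ∀ t ∈ upDirections S I a, s + t ∈ upDirections S I a := by
  obtain ⟨_, ⟨a, ⟨haI, hab⟩, rfl⟩, hmin⟩ :=
    hS.exists_minimal_of_lower (𝒳 := upDirections S I '' {a | a ∈ I ∧ a - b ∈ S})
      (by
        rintro _ ⟨a, ⟨ha, -⟩, rfl⟩
        exact ⟨Set.inter_subset_left, fun t ht r hr => hI.mem_upDirections_of_add_mem ha ht hr⟩)
      ⟨_, Set.mem_image_of_mem _ ⟨hb, by simp⟩⟩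
  refine ⟨a, haI, hab, fun s hs t ht => ?_⟩
  have hsb : a + s - b ∈ S := by simpa [add_sub_right_comm] using S.add_mem hab hs.1
  have hsub : upDirections S I a ⊆ upDirections S I (a + s) :=
    hmin ⟨a + s, ⟨hs.2, hsb⟩, rfl⟩ (hI.upDirections_subset haI (by simpa using hs.1))
  exact ⟨S.add_mem hs.1 ht.1, by simpa [add_assoc] using (hsub ht).2⟩

theorem upDirections_add_eq (hτ : IsConeFace τ S) (h : upDirections S I a = τ) {t : G}
    (ht : t ∈ τ) : upDirections S I (a + t) = τ := by
  ext s
  constructor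
  · rintro ⟨hs, hsI⟩
    have hts : t + s ∈ τ := h ▸ ⟨S.add_mem (hτ.1 ht) hs, by simpa [add_assoc] using hsI⟩
    exact (hτ.2.2.2 t (hτ.1 ht) s hs hts).2
  · intro hs
    have hts : t + s ∈ upDirections S I a := h ▸ hτ.2.2.1 t ht s hs
    exact ⟨hτ.1 hs, by simpa [add_assoc] using hts.2⟩

end Interval

section CoprimaryPart

variable {n : ℕ} {S : AddSubmonoid (Fin n → ℤ)} {I τ : Set (Fin n → ℤ)} {a b : Fin n → ℤ}

theorem coprimaryPart_subset : coprimaryPart S I τ ⊆ I :=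
  Set.iUnion₂_subset fun _ _ => Set.inter_subset_right

theorem mem_coprimaryPart_of_sub_mem (ha : a ∈ closedCogenerators S I τ) (hb : b ∈ I)
    (hab : a - b ∈ S) : b ∈ coprimaryPart S I τ :=
  Set.mem_biUnion ha
    ⟨⟨a + 0, Set.add_mem_add rfl (AddSubgroup.zero_mem _), a - b, hab, by simp⟩, hb⟩

theorem singleton_add_subset_coprimaryPart (ha : a ∈ closedCogenerators S I τ) :
    {a} + τ ⊆ coprimaryPart S I τ := by
  rw [Set.singleton_add]
  rintro _ ⟨s, hs, rfl⟩
  have hsI : a + s ∈ I := ((mem_closedCogenerators_iff.1 ha).2 ▸ hs : s ∈ upDirections S I a).2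
  exact Set.mem_biUnion ha
    ⟨⟨a + s, Set.add_mem_add rfl (AddSubgroup.subset_closure hs), 0, S.zero_mem, sub_zero _⟩, hsI⟩

theorem singleton_add_inter_coprimaryPart (ha : a ∈ closedCogenerators S I τ) :
    ({a} + (S : Set (Fin n → ℤ))) ∩ coprimaryPart S I τ = {a} + τ := by
  refine subset_antisymm ?_ (Set.subset_inter ?_ (singleton_add_subset_coprimaryPart ha))
  · exact ha.2 ▸ Set.inter_subset_inter_right _ coprimaryPart_subset
  · exact ha.2 ▸ Set.inter_subset_left

theorem subset_iUnion_coprimaryPart (hS : S.FG) (hI : IsInterval S I) :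
    I ⊆ ⋃ τ ∈ {τ | IsConeFace τ (S : Set (Fin n → ℤ))}, coprimaryPart S I τ := by
  intro b hb
  obtain ⟨a, ha, hab, hadd⟩ := hI.exists_sub_mem_add_closed_upDirections hS hb
  exact Set.mem_biUnion (hI.isConeFace_upDirections ha hadd) (mem_coprimaryPart_of_sub_mem
    (mem_closedCogenerators_iff.2 ⟨ha, rfl⟩) hb hab)

theorem exists_closedCogenerators_sub_mem (hτ : IsConeFace τ S)
    (hb : b ∈ coprimaryPart S I τ) : ∃ a ∈ closedCogenerators S I τ, a - b ∈ S := by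
  obtain ⟨a, ha, hb', -⟩ := Set.mem_iUnion₂.1 hb
  rw [Set.singleton_add] at hb'
  obtain ⟨_, ⟨t, ht, rfl⟩, q, hq, rfl⟩ := hb'
  obtain ⟨u, hu, v, hv, rfl⟩ := AddSubgroup.exists_sub_of_mem_closure hτ.2.1 hτ.2.2.1 ht
  obtain ⟨haI, hτa⟩ := mem_closedCogenerators_iff.1 ha
  refine ⟨a + u, mem_closedCogenerators_iff.2 ⟨(hτa ▸ hu : u ∈ upDirections S I a).2,
    upDirections_add_eq hτ hτa hu⟩, ?_⟩
  convert S.add_mem (hτ.1 hv) hq using 1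
  beta_reduce
  abel

end CoprimaryPart

theorem discrete_canonical_primary_decomposition_general {n : ℕ} (S : AddSubmonoid (Fin n → ℤ))
    (hFG : S.FG)
    (I : Set (Fin n → ℤ))
    (hI : ∀ x y z : Fin n → ℤ, x ∈ I → z ∈ I → y - x ∈ S → z - y ∈ S → y ∈ I) :
    (I = ⋃ τ ∈ {τ : Set (Fin n → ℤ) | IsConeFace τ (S : Set (Fin n → ℤ))},
        coprimaryPart S I τ) ∧
    (∀ τ : Set (Fin n → ℤ), IsConeFace τ (S : Set (Fin n → ℤ)) →
      ∀ b ∈ coprimaryPart S I τ, ∃ a ∈ coprimaryPart S I τ, a - b ∈ S ∧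
        ({a} + (S : Set (Fin n → ℤ))) ∩ coprimaryPart S I τ = {a} + τ) := by
  refine ⟨(subset_iUnion_coprimaryPart hFG hI).antisymm
    (Set.iUnion₂_subset fun _ _ => coprimaryPart_subset), fun τ hτ b hb => ?_⟩
  obtain ⟨a, ha, hab⟩ := exists_closedCogenerators_sub_mem hτ hb
  exact ⟨a, mem_coprimaryPart_of_sub_mem ha ha.1 (by simp), hab,
    singleton_add_inter_coprimaryPart ha⟩

/-- An interval in a discrete polyhedral group is the union over all
faces `τ` of its `τ`-coprimary parts, and each such part is `τ`-coprimary. -/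
theorem discrete_canonical_primary_decomposition {n : ℕ} (S : AddSubmonoid (Fin n → ℤ))
    (hFG : S.FG) (hpointed : (S : Set (Fin n → ℤ)) ∩ (-(S : Set (Fin n → ℤ))) = {0})
    (I : Set (Fin n → ℤ))
    (hI : ∀ x y z : Fin n → ℤ, x ∈ I → z ∈ I → y - x ∈ S → z - y ∈ S → y ∈ I) :
    (I = ⋃ τ ∈ {τ : Set (Fin n → ℤ) | IsConeFace τ (S : Set (Fin n → ℤ))},
        coprimaryPart S I τ) ∧
    (∀ τ : Set (Fin n → ℤ), IsConeFace τ (S : Set (Fin n → ℤ)) →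
      ∀ b ∈ coprimaryPart S I τ, ∃ a ∈ coprimaryPart S I τ, a - b ∈ S ∧
        ({a} + (S : Set (Fin n → ℤ))) ∩ coprimaryPart S I τ = {a} + τ) :=
  discrete_canonical_primary_decomposition_general S hFG I hI
end
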